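/- Let G be a graph on vertex set partitioned into components, and suppose each component C intersecting a set R has at least d vertices outside R, and the components together contain exactly n vertices of R. Then the sum over such components of |C|² is minimized, subject to these constraints, when there are n/d components each of size exactly 2d (assuming d divides n); in particular Σ_C |C|² ≥ (n/d)(2d)² = 4nd. -/
import Mathlib


/-- If each of `m` components contains `r i > 0` vertices of `R` (totalling `n`)
and at least `d` further vertices outside `R` (so `c i ≥ r i + d`), then the sum
of squared component sizes is at least `(n/d)·(2d)² = 4nd`, the value attained
by `n/d` components of size exactly `2d`. -/
theorem sum_sq_component_sizes_ge (d n : ℝ) (hd : 0 < d) (hn : 0 < n)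
    (m : ℕ) (r c : Fin m → ℝ) (hr : ∀ i, 0 < r i)
    (hc : ∀ i, r i + d ≤ c i) (hsum : ∑ i, r i = n) :
    4 * n * d ≤ ∑ i, (c i) ^ 2 ∧
    ((m : ℝ) * d = n → ∑ _i : Fin m, (2 * d) ^ 2 = 4 * n * d) := by
  constructor
  · have key : ∀ i, 4 * r i * d ≤ (c i) ^ 2 := by
      intro i
      have h1 : (r i + d) ^ 2 ≤ (c i) ^ 2 := by
        have hpos : 0 ≤ r i + d := by have := hr i; linarith
        exact pow_le_pow_left₀ hpos (hc i) 2
      nlinarith [sq_nonneg (r i - d)]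
    calc 4 * n * d = ∑ i, 4 * r i * d := by
          rw [← hsum]; rw [Finset.mul_sum, Finset.sum_mul]
      _ ≤ ∑ i, (c i) ^ 2 := Finset.sum_le_sum fun i _ => key i
  · intro h
    simp [Finset.sum_const, Finset.card_univ]
    nlinarith
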